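/- Let A = (Σ, Q, δ) be a weakly acyclic automaton and T ⊆ Q. Then there exists a word w ∈ Σ* with δ(Q, w) ⊆ T if and only if every sink state of A belongs to T. -/
import Mathlib


/-- The transition function extended to words: `δ*(q, u)`. -/
def deltaStar {Q A : Type*} (δ : Q → A → Q) (q : Q) (u : List A) : Q :=
  u.foldl δ q

/-- A complete deterministic semi-automaton is weakly acyclic if all simple
cycles are self-loops. -/
def WeaklyAcyclic {Q A : Type*} (δ : Q → A → Q) : Prop :=
  ∀ (q : Q) (u : List A), u ≠ [] → deltaStar δ q u = q → ∀ x ∈ u, δ q x = q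

section Aux

variable {Q A : Type*} (δ : Q → A → Q)

lemma deltaStar_append (q : Q) (u v : List A) :
    deltaStar δ q (u ++ v) = deltaStar δ (deltaStar δ q u) v := by
  simp [deltaStar, List.foldl_append]

lemma deltaStar_cons (q : Q) (x : A) (u : List A) :
    deltaStar δ q (x :: u) = deltaStar δ (δ q x) u := rfl

lemma sink_deltaStar {s : Q} (hs : ∀ x : A, δ s x = s) (u : List A) :
    deltaStar δ s u = s := by
  induction u with
  | nil => rfl
  | cons x u ih => rw [deltaStar_cons, hs x, ih]

open Classical in
/-- each state can be driven to a sink -/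
lemma exists_to_sink [Fintype Q] [Fintype A] (hwa : WeaklyAcyclic δ) (q : Q) :
    ∃ u : List A, ∀ x : A, δ (deltaStar δ q u) x = deltaStar δ q u := by
  classical
  let R : Q → Finset Q := fun p => Finset.univ.filter (fun r => ∃ u, deltaStar δ p u = r)
  suffices h : ∀ n (q : Q), (R q).card ≤ n →
      ∃ u : List A, ∀ x : A, δ (deltaStar δ q u) x = deltaStar δ q u from
    h (R q).card q le_rfl
  intro n
  induction n with
  | zero =>
    intro q hq
    exfalso
    have : q ∈ R q := by simp [R]; exact ⟨[], rfl⟩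
    have := Finset.card_pos.mpr ⟨q, this⟩
    omega
  | succ n ih =>
    intro q hq
    by_cases hsink : ∀ x : A, δ q x = q
    · exact ⟨[], hsink⟩
    · push_neg at hsink
      obtain ⟨x, hx⟩ := hsink
      have hsub : R (δ q x) ⊆ R q := by
        intro p hp
        simp only [R, Finset.mem_filter, Finset.mem_univ, true_and] at hp ⊢
        obtain ⟨u, hu⟩ := hp
        exact ⟨x :: u, by rw [deltaStar_cons]; exact hu⟩
      have hq' : q ∉ R (δ q x) := by
        simp only [R, Finset.mem_filter, Finset.mem_univ, true_and]
        rintro ⟨u, hu⟩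
        exact hx (hwa q (x :: u) (by simp) (by rw [deltaStar_cons]; exact hu) x (by simp))
      have hqmem : q ∈ R q := by
        simp only [R, Finset.mem_filter, Finset.mem_univ, true_and]; exact ⟨[], rfl⟩
      have hlt : (R (δ q x)).card < (R q).card :=
        Finset.card_lt_card ⟨hsub, fun h => hq' (h hqmem)⟩
      obtain ⟨u, hu⟩ := ih (δ q x) (by omega)
      exact ⟨x :: u, by rw [deltaStar_cons]; exact hu⟩

lemma exists_word_all_sink [Fintype Q] [Fintype A] (hwa : WeaklyAcyclic δ)
    (S : Finset Q) :
    ∃ w : List A, ∀ q ∈ S, ∀ x : A, δ (deltaStar δ q w) x = deltaStar δ q w := by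
  classical
  induction S using Finset.induction with
  | empty => exact ⟨[], by simp⟩
  | @insert a S _ha ih =>
    obtain ⟨w, hw⟩ := ih
    obtain ⟨u, hu⟩ := exists_to_sink δ hwa (deltaStar δ a w)
    refine ⟨w ++ u, ?_⟩
    intro q hq
    rcases Finset.mem_insert.mp hq with rfl | hq
    · rw [deltaStar_append]; exact hu
    · rw [deltaStar_append, sink_deltaStar δ (hw q hq)]
      exact hw q hq

end Aux

/-- In a weakly acyclic automaton, some word maps the whole state set into `T`
iff every sink state belongs to `T`. -/
theorem sync_into_subset_iff {Q A : Type*} [Fintype Q] [Nonempty Q] [Fintype A]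
    (δ : Q → A → Q) (hwa : WeaklyAcyclic δ) (T : Set Q) :
    (∃ w : List A, (fun q => deltaStar δ q w) '' Set.univ ⊆ T) ↔
      (∀ s : Q, (∀ x : A, δ s x = s) → s ∈ T) := by
  constructor
  · rintro ⟨w, hw⟩ s hs
    have : deltaStar δ s w ∈ T := hw ⟨s, Set.mem_univ s, rfl⟩
    rwa [sink_deltaStar δ hs] at this
  · intro hT
    obtain ⟨w, hw⟩ := exists_word_all_sink δ hwa (Finset.univ : Finset Q)
    refine ⟨w, ?_⟩
    rintro p ⟨q, -, rfl⟩
    exact hT _ (hw q (Finset.mem_univ q))
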